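/- Let n ∈ ℕ, α ∈ (0,1], and μ, ν, c ∈ ℝ with c > ν > 0 and c + n not a nonpositive integer. For x > 0 with |x^α| < 1, ₂F₁(μ, ν; c+n; x^α) = ((c)_n/(c−ν)_n) Σ_{k=0}^{n} (−1)^k C(n,k) ((ν)_k/(c)_k) ₂F₁(μ, ν+k; c+k; x^α). -/

import Mathlib

/-!
Termwise comparison of the two series. Since `(ν)_k (ν+k)_m = (ν)_m (ν+m)_k` and likewise for `c`,
the `m`-th coefficient of the right-hand side is that of `₂F₁(μ, ν; c; z)` times
`((c)_n/(c-ν)_n) Σ_k (-1)^k C(n,k) (ν+m)_k/(c+m)_k`, and by the Chu–Vandermonde identity this sum is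
`(c-ν)_n/(c+m)_n`; what remains is the `m`-th coefficient of `₂F₁(μ, ν; c+n; z)`. All the series
converge for `|z| < 1` by the ratio test, so the finite sum over `k` commutes with the sum over `m`.
-/

open scoped Real BigOperators

noncomputable def poch (b : ℝ) (n : ℕ) : ℝ := (ascPochhammer ℝ n).eval b

noncomputable def F21 (μ ν c z : ℝ) : ℝ :=
  ∑' n : ℕ, poch μ n * poch ν n / (poch c n * (n.factorial : ℝ)) * z ^ n

noncomputable def confD (α : ℝ) (f : ℝ → ℝ) : ℝ → ℝ :=
  fun x => x ^ (1 - α) * deriv f x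

noncomputable def theta (α : ℝ) (f : ℝ → ℝ) : ℝ → ℝ :=
  fun x => (1 / α) * x ^ α * confD α f x

open Finset Filter Topology Polynomial

lemma poch_succ (b : ℝ) (n : ℕ) : poch b (n + 1) = poch b n * (b + n) :=
  ascPochhammer_succ_eval n b

lemma poch_add (b : ℝ) (m k : ℕ) : poch b (m + k) = poch b m * poch (b + m) k := by
  simpa [poch, eval_comp] using (congrArg (eval b) (ascPochhammer_mul ℝ m k)).symm

lemma poch_mul_poch_add_comm (b : ℝ) (m k : ℕ) :
    poch b k * poch (b + k) m = poch b m * poch (b + m) k := by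
  rw [← poch_add, ← poch_add, Nat.add_comm]

lemma poch_pos {b : ℝ} (hb : 0 < b) (n : ℕ) : 0 < poch b n := ascPochhammer_pos n b hb

lemma poch_neg_sub_add_one (a : ℝ) (k : ℕ) : poch (-a - k + 1) k = (-1) ^ k * poch a k := by
  have := ascPochhammer_eval_neg_eq_descPochhammer (R := ℝ) (a + k - 1) k
  rw [descPochhammer_eval_eq_ascPochhammer, show a + k - 1 - k + 1 = a by ring] at this
  rw [poch, poch, ← this]
  ring_nf

/-- Chu–Vandermonde; `poch (r - k + 1) k` is the falling factorial `r (r - 1) ⋯ (r - k + 1)`. -/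
lemma poch_chu_vandermonde (r s : ℝ) (n : ℕ) :
    poch (r + s - n + 1) n = ∑ ij ∈ antidiagonal n,
      (n.choose ij.1 : ℝ) * (poch (r - ij.1 + 1) ij.1 * poch (s - ij.2 + 1) ij.2) := by
  have h := Ring.descPochhammer_smeval_add (R := ℝ) n (Commute.all r s)
  simpa only [poch, descPochhammer_smeval_eq_ascPochhammer, ascPochhammer_smeval_eq_eval] using h

lemma sum_alternating_choose_mul_poch (a b : ℝ) (n : ℕ) :
    ∑ k ∈ range (n + 1), (-1) ^ k * (n.choose k : ℝ) * poch a k * poch (b + k) (n - k)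
      = poch (b - a) n := by
  have h := poch_chu_vandermonde (-a) (b + n - 1) n
  rw [show -a + (b + n - 1) - n + 1 = b - a by ring] at h
  rw [h,
    Nat.sum_antidiagonal_eq_sum_range_succ (fun i j => (n.choose i : ℝ) *
      (poch (-a - i + 1) i * poch (b + n - 1 - j + 1) j))]
  refine sum_congr rfl fun k hk => ?_
  rw [Nat.cast_sub (Nat.lt_succ_iff.mp (mem_range.mp hk)), poch_neg_sub_add_one,
    show b + n - 1 - (n - k : ℝ) + 1 = b + k by ring]
  ring

lemma sum_alternating_choose_mul_poch_div (a b : ℝ) (n : ℕ) (hb : poch b n ≠ 0) :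
    ∑ k ∈ range (n + 1), (-1) ^ k * (n.choose k : ℝ) * (poch a k / poch b k)
      = poch (b - a) n / poch b n := by
  rw [eq_div_iff hb, ← sum_alternating_choose_mul_poch, sum_mul]
  refine sum_congr rfl fun k hk => ?_
  have hsplit : poch b n = poch b k * poch (b + k) (n - k) := by
    rw [← poch_add, Nat.add_sub_cancel' (Nat.lt_succ_iff.mp (mem_range.mp hk))]
  have hbk : poch b k ≠ 0 := left_ne_zero_of_mul (hsplit ▸ hb)
  rw [hsplit]
  field_simp

noncomputable def F21Term (μ ν c z : ℝ) (m : ℕ) : ℝ :=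
  poch μ m * poch ν m / (poch c m * (m.factorial : ℝ)) * z ^ m

lemma F21_eq_tsum_F21Term (μ ν c z : ℝ) : F21 μ ν c z = ∑' m, F21Term μ ν c z m := rfl

section F21Term

variable {μ ν c z : ℝ}

lemma F21Term_succ (hc : 0 < c) (m : ℕ) :
    F21Term μ ν c z (m + 1)
      = F21Term μ ν c z m * ((μ + m) * (ν + m) * z / ((c + m) * (1 + m))) := by
  have : poch c m ≠ 0 := (poch_pos hc m).ne'
  have : c + m ≠ 0 := by positivity
  simp only [F21Term, poch_succ, Nat.factorial_succ]
  push_cast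
  field_simp
  ring

lemma summable_F21Term (hc : 0 < c) (hz : |z| < 1) : Summable (F21Term μ ν c z) := by
  have hratio : Tendsto (fun m : ℕ => |(μ + m) * (ν + m) * z / ((c + m) * (1 + m))|) atTop
      (𝓝 |z|) := by
    have hμ := tendsto_add_mul_div_add_mul_atTop_nhds μ 1 1 one_ne_zero (𝕜 := ℝ)
    have hν := tendsto_add_mul_div_add_mul_atTop_nhds ν c 1 one_ne_zero (𝕜 := ℝ)
    simp only [one_mul, div_one] at hμ hν
    convert ((hμ.mul hν).mul_const z).abs using 2 with m
    · rw [div_mul_div_comm, div_mul_eq_mul_div, mul_comm (1 + (m : ℝ))]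
    · simp
  refine summable_of_ratio_norm_eventually_le (r := (1 + |z|) / 2) (by linarith) ?_
  filter_upwards [hratio.eventually_lt_const (show |z| < (1 + |z|) / 2 by linarith)] with m hm
  rw [F21Term_succ hc, Real.norm_eq_abs, Real.norm_eq_abs, abs_mul, mul_comm _ |F21Term μ ν c z m|]
  exact mul_le_mul_of_nonneg_left hm.le (abs_nonneg _)

lemma poch_div_poch_mul_F21Term (hc : 0 < c) (k m : ℕ) :
    poch ν k / poch c k * F21Term μ (ν + k) (c + k) z m
      = F21Term μ ν c z m * (poch (ν + m) k / poch (c + m) k) := by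
  have := (poch_pos hc k).ne'
  have := (poch_pos hc m).ne'
  have := (poch_pos (by positivity : 0 < c + k) m).ne'
  have := (poch_pos (by positivity : 0 < c + m) k).ne'
  simp only [F21Term]
  field_simp
  linear_combination (poch μ m * z ^ m) *
    (poch_mul_poch_add_comm ν m k * poch c m * poch (c + m) k
      - poch ν m * poch (ν + m) k * poch_mul_poch_add_comm c m k)

lemma F21Term_add_nat (hc : 0 < c) (n m : ℕ) :
    F21Term μ ν (c + n) z m = F21Term μ ν c z m * (poch c n / poch (c + m) n) := by
  have := (poch_pos hc m).ne'
  have := (poch_pos (by positivity : 0 < c + n) m).ne'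
  have := (poch_pos (by positivity : 0 < c + m) n).ne'
  simp only [F21Term]
  field_simp
  linear_combination (poch μ m * poch ν m * z ^ m) * poch_mul_poch_add_comm c n m

lemma F21Term_add_nat_eq_sum (hc : 0 < c) (hcν : ν < c) (n m : ℕ) :
    F21Term μ ν (c + n) z m = poch c n / poch (c - ν) n *
      ∑ k ∈ range (n + 1), (-1) ^ k * (n.choose k : ℝ) * (poch ν k / poch c k)
        * F21Term μ (ν + k) (c + k) z m := by
  have hcm := (poch_pos (by positivity : 0 < c + m) n).ne'
  have hcνn := (poch_pos (sub_pos.mpr hcν) n).ne'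
  have hchu := sum_alternating_choose_mul_poch_div (ν + m) (c + m) n hcm
  rw [show c + m - (ν + m) = c - ν by ring] at hchu
  calc F21Term μ ν (c + n) z m
      = poch c n / poch (c - ν) n
          * (F21Term μ ν c z m * (poch (c - ν) n / poch (c + m) n)) := by
        rw [F21Term_add_nat hc]
        field_simp
    _ = poch c n / poch (c - ν) n * ∑ k ∈ range (n + 1), (-1) ^ k * (n.choose k : ℝ)
          * (F21Term μ ν c z m * (poch (ν + m) k / poch (c + m) k)) := by
        simp only [← hchu, mul_sum, mul_left_comm (F21Term μ ν c z m)]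
    _ = _ := by
        simp only [← poch_div_poch_mul_F21Term hc, mul_assoc]

theorem F21_add_nat_eq_sum (hc : 0 < c) (hcν : ν < c) (hz : |z| < 1) (n : ℕ) :
    F21 μ ν (c + n) z = poch c n / poch (c - ν) n *
      ∑ k ∈ range (n + 1), (-1) ^ k * (n.choose k : ℝ) * (poch ν k / poch c k)
        * F21 μ (ν + k) (c + k) z := by
  have hsummable (k : ℕ) : Summable (F21Term μ (ν + k) (c + k) z) :=
    summable_F21Term (by positivity) hz
  simp only [F21_eq_tsum_F21Term, F21Term_add_nat_eq_sum hc hcν, tsum_mul_left]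
  rw [Summable.tsum_finsetSum fun k _ => (hsummable k).mul_left _]
  simp only [tsum_mul_left]

end F21Term

theorem stmt18_general (n : ℕ) (α : ℝ) (μ ν c : ℝ)
    (hν : 0 < ν) (hcν : ν < c)
    (x : ℝ) (hx1 : |x ^ α| < 1) :
    F21 μ ν (c + n) (x ^ α)
      = (poch c n / poch (c - ν) n)
        * ∑ k ∈ Finset.range (n + 1),
            (-1 : ℝ) ^ k * (n.choose k : ℝ) * (poch ν k / poch c k)
              * F21 μ (ν + k) (c + k) (x ^ α) :=
  F21_add_nat_eq_sum (hν.trans hcν) hcν hx1 n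

theorem stmt18 (n : ℕ) (α : ℝ) (hα : α ∈ Set.Ioc (0:ℝ) 1) (μ ν c : ℝ)
    (hν : 0 < ν) (hcν : ν < c) (hc : ∀ k : ℕ, c + (n : ℝ) ≠ -(k : ℝ))
    (x : ℝ) (hx : 0 < x) (hx1 : |x ^ α| < 1) :
    F21 μ ν (c + n) (x ^ α)
      = (poch c n / poch (c - ν) n)
        * ∑ k ∈ Finset.range (n + 1),
            (-1 : ℝ) ^ k * (n.choose k : ℝ) * (poch ν k / poch c k)
              * F21 μ (ν + k) (c + k) (x ^ α) :=
  stmt18_general n α μ ν c hν hcν x hx1
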